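/- Let (S, P) be an acyclic finite DTMC, C ⊆ S an avoid set and B ⊆ S a target set. If a function p : S → ℝ satisfies the SMT-encoding constraints for constrained reachability — namely p s = 1 for every s ∈ B, p s = 0 for every s ∉ B from which B is not C-avoidingly reachable, and p s = ∑_{s' ∈ S} P s s' · p s' for every s ∉ B from which B is C-avoidingly reachable — then p s = PUntil s for every s ∈ S. In particular, the SMT encoding of the until probability has a unique solution on acyclic DTMCs, equal to the constrained reachability probability. -/

import Mathlib

/-!
`⨆ₙ untilN n` is the limit of a monotone sequence bounded by `1`, so passing to the limit in
the recursion defining `untilN` shows that it satisfies the encoding constraints itself.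
Any two solutions of the constraints agree, by well-founded induction along `≺`: an absorbing
state from which `B` is avoidingly reachable already lies in `B`, so wherever the recursive
constraint applies there is no self-loop and the sum only involves strictly smaller states.
-/

open scoped Classical

/-- n-step constrained reachability values for the until property ¬C U B. -/
noncomputable def untilN {S : Type*} [Fintype S] (P : S → S → ℝ) (C B : Set S) :
    ℕ → S → ℝ
  | 0, s => if s ∈ B then 1 else 0
  | n + 1, s =>
      if s ∈ B then 1 else if s ∈ C then 0 else ∑ s' : S, P s s' * untilN P C B n s'

/-- `B` is C-avoidingly reachable from `s`. -/
def AvoidReach {S : Type*} (P : S → S → ℝ) (C B : Set S) (s : S) : Prop :=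
  ∃ t ∈ B, Relation.ReflTransGen (fun a b => 0 < P a b ∧ a ∉ C) s t

open Filter Topology

section

variable {S : Type*} {P : S → S → ℝ} {C B : Set S}

theorem AvoidReach.of_mem {s : S} (hs : s ∈ B) : AvoidReach P C B s :=
  ⟨s, hs, .refl⟩

theorem AvoidReach.head {s s' : S} (hP : 0 < P s s') (hC : s ∉ C) (h : AvoidReach P C B s') :
    AvoidReach P C B s :=
  let ⟨t, ht, hst⟩ := h
  ⟨t, ht, .head ⟨hP, hC⟩ hst⟩

theorem AvoidReach.not_mem_avoid {s : S} (h : AvoidReach P C B s) (hB : s ∉ B) : s ∉ C := by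
  obtain ⟨t, ht, hst⟩ := h
  rcases hst.cases_head with rfl | ⟨_, ⟨_, hC⟩, _⟩
  · exact absurd ht hB
  · exact hC

variable [Fintype S]

theorem eq_zero_of_self_eq_one (hP : ∀ s s', 0 ≤ P s s') (hsum : ∀ s, ∑ s', P s s' = 1)
    {s x : S} (hss : P s s = 1) (hx : x ≠ s) : P s x = 0 := by
  have h := Finset.sum_le_sum_of_subset_of_nonneg (Finset.subset_univ {s, x})
    fun y _ _ => hP s y
  rw [Finset.sum_pair hx.symm, hsum, hss] at h
  linarith [hP s x]

theorem AvoidReach.mem_of_self_eq_one (hP : ∀ s s', 0 ≤ P s s')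
    (hsum : ∀ s, ∑ s', P s s' = 1) {s : S} (h : AvoidReach P C B s) (hss : P s s = 1) :
    s ∈ B := by
  obtain ⟨t, ht, hst⟩ := h
  suffices ∀ {u}, Relation.ReflTransGen (fun a b => 0 < P a b ∧ a ∉ C) s u → u = s from
    this hst ▸ ht
  intro u hsu
  induction hsu with
  | refl => rfl
  | tail _ hstep ih =>
    subst ih
    by_contra hne
    exact hstep.1.ne' (eq_zero_of_self_eq_one hP hsum hss hne)

theorem untilN_of_mem {s : S} (hs : s ∈ B) (n : ℕ) : untilN P C B n s = 1 := by
  cases n <;> simp [untilN, hs]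

theorem untilN_succ_of_not_mem {s : S} (hB : s ∉ B) (hC : s ∉ C) (n : ℕ) :
    untilN P C B (n + 1) s = ∑ s', P s s' * untilN P C B n s' := by
  simp [untilN, hB, hC]

theorem untilN_nonneg (hP : ∀ s s', 0 ≤ P s s') (n : ℕ) (s : S) : 0 ≤ untilN P C B n s := by
  induction n generalizing s with
  | zero => simp only [untilN]; split_ifs <;> norm_num
  | succ n ih =>
    simp only [untilN]
    split_ifs
    · exact zero_le_one
    · exact le_rfl
    · exact Finset.sum_nonneg fun s' _ => mul_nonneg (hP s s') (ih s')

theorem untilN_le_one (hP : ∀ s s', 0 ≤ P s s') (hsum : ∀ s, ∑ s', P s s' = 1) (n : ℕ)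
    (s : S) : untilN P C B n s ≤ 1 := by
  induction n generalizing s with
  | zero => simp only [untilN]; split_ifs <;> norm_num
  | succ n ih =>
    simp only [untilN]
    split_ifs
    · exact le_rfl
    · exact zero_le_one
    · calc ∑ s', P s s' * untilN P C B n s' ≤ ∑ s', P s s' :=
            Finset.sum_le_sum fun s' _ => mul_le_of_le_one_right (hP s s') (ih s')
        _ = 1 := hsum s

theorem untilN_le_succ (hP : ∀ s s', 0 ≤ P s s') (n : ℕ) (s : S) :
    untilN P C B n s ≤ untilN P C B (n + 1) s := by
  induction n generalizing s with
  | zero =>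
    by_cases hB : s ∈ B
    · rw [untilN_of_mem hB, untilN_of_mem hB]
    · rw [untilN, if_neg hB]
      exact untilN_nonneg hP 1 s
  | succ n ih =>
    simp only [untilN]
    split_ifs
    · exact le_rfl
    · exact le_rfl
    · exact Finset.sum_le_sum fun s' _ => mul_le_mul_of_nonneg_left (ih s') (hP s s')

theorem untilN_eq_zero_of_not_avoidReach (hP : ∀ s s', 0 ≤ P s s') (n : ℕ) {s : S}
    (hB : s ∉ B) (hR : ¬AvoidReach P C B s) : untilN P C B n s = 0 := by
  induction n generalizing s with
  | zero => simp [untilN, hB]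
  | succ n ih =>
    simp only [untilN, if_neg hB]
    split_ifs with hC
    · rfl
    refine Finset.sum_eq_zero fun s' _ => ?_
    rcases (hP s s').eq_or_lt with h | h
    · rw [← h, zero_mul]
    · have hB' : s' ∉ B := fun hs' => hR (.head h hC (.of_mem hs'))
      rw [ih hB' fun hR' => hR (hR'.head h hC), mul_zero]

variable (P C B) in
/-- The constrained reachability probability `PUntil`. -/
noncomputable def untilProb (s : S) : ℝ :=
  ⨆ n, untilN P C B n s

theorem tendsto_untilN (hP : ∀ s s', 0 ≤ P s s') (hsum : ∀ s, ∑ s', P s s' = 1) (s : S) :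
    Tendsto (fun n => untilN P C B n s) atTop (𝓝 (untilProb P C B s)) :=
  tendsto_atTop_ciSup (monotone_nat_of_le_succ fun n => untilN_le_succ hP n s)
    ⟨1, Set.forall_mem_range.2 fun n => untilN_le_one hP hsum n s⟩

theorem untilProb_eq_sum (hP : ∀ s s', 0 ≤ P s s') (hsum : ∀ s, ∑ s', P s s' = 1) {s : S}
    (hB : s ∉ B) (hC : s ∉ C) : untilProb P C B s = ∑ s', P s s' * untilProb P C B s' := by
  have hsucc := (tendsto_untilN (C := C) (B := B) hP hsum s).comp (tendsto_add_atTop_nat 1)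
  have hlim := tendsto_finsetSum Finset.univ fun s' _ =>
    (tendsto_untilN (C := C) (B := B) hP hsum s').const_mul (P s s')
  simp only [Function.comp_def, untilN_succ_of_not_mem hB hC] at hsucc
  exact tendsto_nhds_unique hsucc hlim

variable (P C B) in
/-- The SMT encoding of the until probability. -/
structure IsUntilSolution (p : S → ℝ) : Prop where
  eq_one_of_mem : ∀ s ∈ B, p s = 1
  eq_zero_of_not_avoidReach : ∀ s : S, s ∉ B → ¬AvoidReach P C B s → p s = 0
  eq_sum_of_avoidReach : ∀ s : S, s ∉ B → AvoidReach P C B s → p s = ∑ s', P s s' * p s'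

theorem isUntilSolution_untilProb (hP : ∀ s s', 0 ≤ P s s') (hsum : ∀ s, ∑ s', P s s' = 1) :
    IsUntilSolution P C B (untilProb P C B) where
  eq_one_of_mem s hs := by simp only [untilProb, untilN_of_mem hs, ciSup_const]
  eq_zero_of_not_avoidReach s hB hR := by
    simp only [untilProb, untilN_eq_zero_of_not_avoidReach hP _ hB hR, ciSup_const]
  eq_sum_of_avoidReach s hB hR := untilProb_eq_sum hP hsum hB (hR.not_mem_avoid hB)

theorem IsUntilSolution.unique (hP : ∀ s s', 0 ≤ P s s') (hsum : ∀ s, ∑ s', P s s' = 1)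
    (habs : ∀ s, P s s = 1 ∨ P s s = 0) (hwf : WellFounded fun s' s => 0 < P s s' ∧ s' ≠ s)
    {p q : S → ℝ} (hp : IsUntilSolution P C B p) (hq : IsUntilSolution P C B q) : p = q := by
  funext s
  induction s using hwf.induction with
  | _ s ih =>
  by_cases hB : s ∈ B
  · rw [hp.eq_one_of_mem s hB, hq.eq_one_of_mem s hB]
  by_cases hR : AvoidReach P C B s
  · have hss : P s s = 0 :=
      (habs s).resolve_left fun h => hB (hR.mem_of_self_eq_one hP hsum h)
    rw [hp.eq_sum_of_avoidReach s hB hR, hq.eq_sum_of_avoidReach s hB hR]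
    refine Finset.sum_congr rfl fun s' _ => ?_
    rcases (hP s s').eq_or_lt with h | h
    · rw [← h, zero_mul, zero_mul]
    · rw [ih s' ⟨h, by rintro rfl; exact h.ne' hss⟩]
  · rw [hp.eq_zero_of_not_avoidReach s hB hR, hq.eq_zero_of_not_avoidReach s hB hR]

end

theorem smt_until_unique_on_acyclic_general {S : Type*} [Fintype S]
    (P : S → S → ℝ)
    (hP : ∀ s s' : S, 0 ≤ P s s')
    (hsum : ∀ s : S, ∑ s' : S, P s s' = 1)
    (habs : ∀ s : S, P s s = 1 ∨ P s s = 0)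
    (hwf : WellFounded (fun s' s : S => 0 < P s s' ∧ s' ≠ s))
    (C B : Set S) (p : S → ℝ)
    (h1 : ∀ s ∈ B, p s = 1)
    (h0 : ∀ s : S, s ∉ B → ¬ AvoidReach P C B s → p s = 0)
    (hrec : ∀ s : S, s ∉ B → AvoidReach P C B s → p s = ∑ s' : S, P s s' * p s') :
    ∀ s : S, p s = ⨆ n : ℕ, untilN P C B n s :=
  congrFun (IsUntilSolution.unique hP hsum habs hwf ⟨h1, h0, hrec⟩
    (isUntilSolution_untilProb hP hsum))

/-- Let (S, P) be an acyclic finite DTMC, C ⊆ S an avoid set and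
B ⊆ S a target set. If a function p : S → ℝ satisfies the SMT-encoding constraints
for constrained reachability — p s = 1 on B, p s = 0 on states outside B from which
B is not C-avoidingly reachable, and p s = ∑ s', P s s' * p s' on states outside B
from which B is C-avoidingly reachable — then p equals the constrained reachability
probability `PUntil = ⨆ₙ until n` everywhere. -/
theorem smt_until_unique_on_acyclic {S : Type*} [Fintype S] [Nonempty S]
    (P : S → S → ℝ)
    (hP : ∀ s s' : S, 0 ≤ P s s')
    (hsum : ∀ s : S, ∑ s' : S, P s s' = 1)
    (habs : ∀ s : S, P s s = 1 ∨ P s s = 0)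
    (hwf : WellFounded (fun s' s : S => 0 < P s s' ∧ s' ≠ s))
    (C B : Set S) (p : S → ℝ)
    (h1 : ∀ s ∈ B, p s = 1)
    (h0 : ∀ s : S, s ∉ B → ¬ AvoidReach P C B s → p s = 0)
    (hrec : ∀ s : S, s ∉ B → AvoidReach P C B s → p s = ∑ s' : S, P s s' * p s') :
    ∀ s : S, p s = ⨆ n : ℕ, untilN P C B n s :=
  smt_until_unique_on_acyclic_general P hP hsum habs hwf C B p h1 h0 hrec
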